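/- Fix ε with 0 < ε < 1/3. Let Y_{n,ε} be the number of nodes v of a uniformly random ordered binary tree with n leaves whose fringe subtree t(v) has more than n^ε leaves. Then there is a constant C > 0 such that E(Y_{n,ε}) ≤ C·n^{1−ε/2} for all n ≥ 1. -/

import Mathlib

open Filter Finset
open scoped Classical

/-- Ordered binary trees: every node has exactly two or no children. -/
inductive BT : Type
  | leaf : BT
  | node : BT → BT → BT
deriving DecidableEq

namespace BT

/-- The size of a binary tree: its number of leaves. -/
def size : BT → ℕ
  | leaf => 1
  | node l r => size l + size r

/-- The multiset of all fringe subtrees of a tree (one for every node). -/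
def fringe : BT → Multiset BT
  | leaf => {leaf}
  | node l r => node l r ::ₘ (fringe l + fringe r)

/-- The finset of all ordered binary trees with `n` leaves. -/
def treesOfSize : ℕ → Finset BT
  | 0 => ∅
  | 1 => {leaf}
  | n + 2 =>
    (Finset.range (n + 1)).attach.biUnion fun k =>
      ((treesOfSize (k.1 + 1)) ×ˢ (treesOfSize (n + 1 - k.1))).image fun p => node p.1 p.2
  decreasing_by
    · have := Finset.mem_range.mp k.2; omega
    · omega

/-- Boolean test whether two ordered binary trees are isomorphic as unordered trees. -/
def isoB : BT → BT → Bool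
  | leaf, leaf => true
  | leaf, node _ _ => false
  | node _ _, leaf => false
  | node l1 r1, node l2 r2 => (isoB l1 l2 && isoB r1 r2) || (isoB l1 r2 && isoB r1 l2)

/-- An injective encoding of ordered binary trees into the natural numbers. -/
def encode : BT → ℕ
  | leaf => 0
  | node l r => Nat.pair (encode l) (encode r) + 1

/-- The canonical representative of the isomorphism class of a binary tree:
two trees are isomorphic (equal as unordered trees) iff their canonical forms agree. -/
def canon : BT → BT
  | leaf => leaf
  | node l r =>
    let l' := canon l
    let r' := canon r
    if encode l' ≤ encode r' then node l' r' else node r' l'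

/-- Number of isomorphism classes of unordered binary trees represented among
the fringe subtrees of `t`. -/
def isoClasses (t : BT) : ℕ := ((fringe t).toFinset.image canon).card

/-- Number of distinct ordered binary trees occurring among the fringe subtrees of `t`. -/
def numDistinct (t : BT) : ℕ := (fringe t).toFinset.card

/-- The probability of a tree under the binary search tree model. -/
noncomputable def pbst (t : BT) : ℝ :=
  ((fringe t).map fun s => if 1 < size s then (1 : ℝ) / ((size s : ℝ) - 1) else 1).prod

/-- Expectation of `f` under the uniform distribution on trees with `n` leaves. -/
noncomputable def unifE (n : ℕ) (f : BT → ℝ) : ℝ :=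
  (∑ t ∈ treesOfSize n, f t) / (treesOfSize n).card

/-- Probability of an event under the uniform distribution on trees with `n` leaves. -/
noncomputable def unifP (n : ℕ) (p : BT → Prop) : ℝ :=
  ((treesOfSize n).filter p).card / (treesOfSize n).card

/-- Expectation of `f` under the binary search tree distribution on trees with `n` leaves. -/
noncomputable def bstE (n : ℕ) (f : BT → ℝ) : ℝ :=
  ∑ t ∈ treesOfSize n, pbst t * f t

/-- Probability of an event under the binary search tree distribution on trees with `n` leaves. -/
noncomputable def bstP (n : ℕ) (p : BT → Prop) : ℝ :=
  ∑ t ∈ (treesOfSize n).filter p, pbst t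

end BT

/-!
Summing over all trees with `n` leaves, the fringe subtrees with `m` leaves number
`C_{m-1} (n-m+1) C_{n-m}`: such an occurrence is a tree with `n-m+1` leaves, one of them marked,
in which the marked leaf is replaced by a tree with `m` leaves. Hence, with `K = ⌊n^ε⌋`,
`E(Y_{n,ε}) = ∑_{K < m ≤ n} C_{m-1} (n-m+1) C_{n-m} / C_{n-1}`. The Catalan estimates
`C_k² (k+1)³ ≤ 16^k ≤ 4 (k+1)³ C_k²` bound the `m`-th term by
`2 n^{3/2} / (m^{3/2} (n-m+1)^{1/2})`, which is at most `6 (n m^{-3/2} + (n-m+1)^{-1/2})`.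
Summing, the first part is `O(n / √K) = O(n^{1-ε/2})` and the second `O(√n)`.
-/

open Real

theorem Multiset.countP_eq_sum_countP_eq {α β : Type*} [DecidableEq β] (s : Multiset α)
    (f : α → β) (S : Finset β) {p : α → Prop} [DecidablePred p] (h : ∀ x ∈ s, p x ↔ f x ∈ S) :
    s.countP p = ∑ b ∈ S, s.countP (fun x => f x = b) := by
  induction s using Multiset.induction_on with
  | empty => simp
  | cons a s ih =>
    simp only [Multiset.countP_cons, Finset.sum_add_distrib,
      ih fun x hx => h x (Multiset.mem_cons_of_mem hx), Finset.sum_ite_eq,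
      h a (Multiset.mem_cons_self a s)]

theorem Finset.Nat.sum_antidiagonal_add_of_eq_zero {M : Type*} [AddCommMonoid M]
    (f : ℕ → ℕ → M) {a : ℕ} (h : ∀ i < a, ∀ j, f i j = 0) (k : ℕ) :
    ∑ ij ∈ antidiagonal (a + k), f ij.1 ij.2 = ∑ ij ∈ antidiagonal k, f (ij.1 + a) ij.2 := by
  induction a generalizing f with
  | zero => simp
  | succ a ih =>
    rw [show a + 1 + k = (a + k) + 1 by omega, Nat.sum_antidiagonal_succ, h 0 (by omega),
      zero_add, ih (fun i j => f (i + 1) j) (fun i hi j => h _ (by omega) j)]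
    simp only [add_assoc]

theorem catalan_pos (k : ℕ) : 0 < catalan k :=
  Nat.pos_of_mul_pos_left (succ_mul_catalan_eq_centralBinom k ▸ k.centralBinom_pos)

theorem add_two_mul_catalan_succ (k : ℕ) :
    (k + 2) * catalan (k + 1) = 2 * (2 * k + 1) * catalan k := by
  have h := Nat.succ_mul_centralBinom_succ k
  rw [← succ_mul_catalan_eq_centralBinom, ← succ_mul_catalan_eq_centralBinom] at h
  refine Nat.eq_of_mul_eq_mul_left k.succ_pos ?_
  linarith

theorem two_mul_sum_antidiagonal_succ_mul_catalan (n : ℕ) :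
    2 * ∑ ij ∈ antidiagonal n, (ij.1 + 1) * catalan ij.1 * catalan ij.2
      = (n + 2) * catalan (n + 1) := by
  rw [two_mul]
  nth_rw 2 [← Nat.sum_antidiagonal_swap]
  rw [← sum_add_distrib, catalan_succ', mul_sum]
  refine sum_congr rfl fun ij hij => ?_
  rw [← mem_antidiagonal.mp hij]
  simp only [Prod.fst_swap, Prod.snd_swap]
  ring

theorem catalan_sq_mul_succ_pow_three_le (k : ℕ) : catalan k ^ 2 * (k + 1) ^ 3 ≤ 16 ^ k := by
  induction k with
  | zero => simp
  | succ k ih =>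
    have hrec := add_two_mul_catalan_succ k
    have hpoly : (k + 2) * (2 * k + 1) ^ 2 ≤ 4 * (k + 1) ^ 3 := by ring_nf; omega
    calc catalan (k + 1) ^ 2 * (k + 1 + 1) ^ 3
        = (k + 2) * ((k + 2) * catalan (k + 1)) ^ 2 := by ring
      _ = 4 * ((k + 2) * (2 * k + 1) ^ 2) * catalan k ^ 2 := by rw [hrec]; ring
      _ ≤ 4 * (4 * (k + 1) ^ 3) * catalan k ^ 2 := by gcongr
      _ = 16 * (catalan k ^ 2 * (k + 1) ^ 3) := by ring
      _ ≤ 16 ^ (k + 1) := by rw [pow_succ' 16 k]; exact Nat.mul_le_mul_left 16 ih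

/-- Equivalently `16 ^ k ≤ 4 k (k + 1)² C_k²` for `k ≥ 1`: unlike `sixteen_pow_le`, this sharper
form is preserved by the recurrence `add_two_mul_catalan_succ`. -/
theorem sixteen_pow_succ_le (k : ℕ) :
    16 ^ (k + 1) ≤ 4 * (k + 1) * ((k + 2) * catalan (k + 1)) ^ 2 := by
  induction k with
  | zero => simp [catalan_one]
  | succ k ih =>
    have hrec := add_two_mul_catalan_succ (k + 1)
    have hpoly : 4 * (k + 1) * (k + 2) ≤ (2 * (k + 1) + 1) ^ 2 := by ring_nf; omega
    calc 16 ^ (k + 1 + 1) = 16 * 16 ^ (k + 1) := pow_succ' _ _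
      _ ≤ 16 * (4 * (k + 1) * ((k + 2) * catalan (k + 1)) ^ 2) := by gcongr
      _ = 16 * (4 * (k + 1) * (k + 2)) * ((k + 2) * catalan (k + 1) ^ 2) := by ring
      _ ≤ 16 * (2 * (k + 1) + 1) ^ 2 * ((k + 2) * catalan (k + 1) ^ 2) := by gcongr
      _ = 4 * (k + 1 + 1) * ((k + 1 + 2) * catalan (k + 1 + 1)) ^ 2 := by rw [hrec]; ring

theorem sixteen_pow_le (k : ℕ) : 16 ^ k ≤ 4 * (k + 1) ^ 3 * catalan k ^ 2 := by
  cases k with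
  | zero => simp
  | succ k =>
    calc 16 ^ (k + 1) ≤ 4 * (k + 1) * ((k + 2) * catalan (k + 1)) ^ 2 := sixteen_pow_succ_le k
      _ ≤ 4 * (k + 2) * ((k + 2) * catalan (k + 1)) ^ 2 := by gcongr; omega
      _ = 4 * (k + 1 + 1) ^ 3 * catalan (k + 1) ^ 2 := by ring

theorem sq_catalan_mul_catalan_le (m j : ℕ) :
    (catalan m * ((j + 1) * catalan j)) ^ 2 * ((m + 1) ^ 3 * (j + 1))
      ≤ 4 * (m + j + 1) ^ 3 * catalan (m + j) ^ 2 :=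
  calc (catalan m * ((j + 1) * catalan j)) ^ 2 * ((m + 1) ^ 3 * (j + 1))
      = (catalan m ^ 2 * (m + 1) ^ 3) * (catalan j ^ 2 * (j + 1) ^ 3) := by ring
    _ ≤ 16 ^ m * 16 ^ j :=
      Nat.mul_le_mul (catalan_sq_mul_succ_pow_three_le m) (catalan_sq_mul_succ_pow_three_le j)
    _ = 16 ^ (m + j) := (pow_add _ _ _).symm
    _ ≤ 4 * (m + j + 1) ^ 3 * catalan (m + j) ^ 2 := sixteen_pow_le _

theorem mul_sqrt_div_le {x y N : ℝ} (hx : 0 < x) (hy : 0 < y) (hN : 0 ≤ N) (h : N ≤ x + y) :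
    N * √N / (x * √x * √y) ≤ 3 * (N / (x * √x) + 1 / √y) := by
  have hsx := sqrt_pos.mpr hx
  have hsy := sqrt_pos.mpr hy
  rcases le_total x y with hxy | hyx
  · have hNy : √N ≤ 3 * √y := by
      rw [show 3 * √y = √(3 ^ 2 * y) by rw [sqrt_mul (by norm_num), sqrt_sq (by norm_num)]]
      exact sqrt_le_sqrt (by linarith)
    calc N * √N / (x * √x * √y) ≤ N * (3 * √y) / (x * √x * √y) := by gcongr
      _ = 3 * (N / (x * √x)) := by field_simp
      _ ≤ 3 * (N / (x * √x) + 1 / √y) := by gcongr; linarith [one_div_pos.mpr hsy]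
  · have hNx : N * √N ≤ 3 * (x * √x) := by
      have hsN := sq_sqrt hN
      have hsx2 := sq_sqrt hx.le
      nlinarith [sqrt_nonneg N, mul_pos hx hsx, sq_nonneg (√N - √x), sq_nonneg (√N + √x)]
    calc N * √N / (x * √x * √y) ≤ 3 * (x * √x) / (x * √x * √y) := by gcongr
      _ = 3 * (1 / √y) := by field_simp
      _ ≤ 3 * (N / (x * √x) + 1 / √y) := by gcongr; linarith [div_nonneg hN (mul_pos hx hsx).le]

theorem sum_range_inv_sqrt_succ_le (N : ℕ) : ∑ i ∈ range N, 1 / √((i : ℝ) + 1) ≤ 2 * √N := by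
  have hstep : ∀ i : ℕ, 1 / √((i : ℝ) + 1) ≤ 2 * √((i + 1 : ℕ) : ℝ) - 2 * √(i : ℝ) := by
    intro i
    push_cast
    have hb := sqrt_pos.mpr (by positivity : (0 : ℝ) < i + 1)
    have hb2 := sq_sqrt (by positivity : (0 : ℝ) ≤ i + 1)
    have ha2 := sq_sqrt (Nat.cast_nonneg (α := ℝ) i)
    rw [div_le_iff₀ hb]
    nlinarith [sq_nonneg (√(i : ℝ) - √((i : ℝ) + 1))]
  calc ∑ i ∈ range N, 1 / √((i : ℝ) + 1)
      ≤ ∑ i ∈ range N, (2 * √((i + 1 : ℕ) : ℝ) - 2 * √(i : ℝ)) := sum_le_sum fun i _ => hstep i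
    _ = 2 * √N := by rw [sum_range_sub (fun i => 2 * √(i : ℝ))]; simp

theorem sum_Ico_inv_sqrt_sub_le (K n : ℕ) : ∑ i ∈ Ico K n, 1 / √((n : ℝ) - i) ≤ 2 * √n := by
  calc ∑ i ∈ Ico K n, 1 / √((n : ℝ) - i) ≤ ∑ i ∈ range n, 1 / √((n : ℝ) - i) := by
        refine sum_le_sum_of_subset_of_nonneg (fun i hi => ?_) fun _ _ _ => by positivity
        exact mem_range.mpr (mem_Ico.mp hi).2
    _ = ∑ i ∈ range n, 1 / √((i : ℝ) + 1) := by
        rw [← sum_range_reflect]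
        refine sum_congr rfl fun i hi => ?_
        have := mem_range.mp hi
        rw [Nat.cast_sub (by omega), Nat.cast_sub (by omega)]
        ring_nf
    _ ≤ 2 * √n := sum_range_inv_sqrt_succ_le n

theorem sum_Ico_inv_succ_mul_sqrt_succ_le {K : ℕ} (hK : 0 < K) (n : ℕ) :
    ∑ i ∈ Ico K n, 1 / (((i : ℝ) + 1) * √((i : ℝ) + 1)) ≤ 2 / √K := by
  rcases lt_or_ge n K with hnK | hKn
  · rw [Ico_eq_empty_of_le hnK.le, sum_empty]
    positivity
  have hstep : ∀ i ∈ Ico K n,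
      1 / (((i : ℝ) + 1) * √((i : ℝ) + 1)) ≤ -2 / √((i + 1 : ℕ) : ℝ) - -2 / √(i : ℝ) := by
    intro i hi
    push_cast
    have hi0 : (0 : ℝ) < i := by have := (mem_Ico.mp hi).1; exact_mod_cast (by omega : 0 < i)
    have ha := sqrt_pos.mpr hi0
    have hb := sqrt_pos.mpr (by positivity : (0 : ℝ) < i + 1)
    have ha2 := sq_sqrt hi0.le
    have hb2 := sq_sqrt (by positivity : (0 : ℝ) ≤ i + 1)
    rw [neg_div, neg_div, sub_neg_eq_add, ← sub_eq_neg_add, div_sub_div _ _ ha.ne' hb.ne',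
      div_le_div_iff₀ (by positivity) (by positivity)]
    nlinarith [mul_pos ha hb, sq_nonneg (√(i : ℝ) - √((i : ℝ) + 1)), mul_pos (mul_pos ha hb) hb]
  calc ∑ i ∈ Ico K n, 1 / (((i : ℝ) + 1) * √((i : ℝ) + 1))
      ≤ ∑ i ∈ Ico K n, (-2 / √((i + 1 : ℕ) : ℝ) - -2 / √(i : ℝ)) := sum_le_sum hstep
    _ = 2 / √K - 2 / √n := by rw [sum_Ico_sub (fun i => -2 / √(i : ℝ)) hKn]; ring
    _ ≤ 2 / √K := by linarith [div_nonneg zero_le_two (sqrt_nonneg (n : ℝ))]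

theorem div_sqrt_add_sqrt_le_rpow {ε : ℝ} (hε : ε ≤ 1) {n K : ℕ} (hn : 1 ≤ n) (hK : 0 < K)
    (hnK : (n : ℝ) ^ ε < K + 1) : n / √K + √n ≤ 3 * (n : ℝ) ^ (1 - ε / 2) := by
  have hn' : (1 : ℝ) ≤ n := by exact_mod_cast hn
  have hK' : (1 : ℝ) ≤ K := by exact_mod_cast hK
  have hsK := sqrt_pos.mpr (by linarith : (0 : ℝ) < K)
  have hsplit : (n : ℝ) = n ^ (1 - ε / 2) * n ^ (ε / 2) := by
    rw [← rpow_add (by linarith)]; norm_num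
  have hhalf : (n : ℝ) ^ (ε / 2) ≤ 2 * √K :=
    calc (n : ℝ) ^ (ε / 2) = √((n : ℝ) ^ ε) := by
          rw [sqrt_eq_rpow, ← rpow_mul (by linarith)]; ring_nf
      _ ≤ √(2 ^ 2 * K) := sqrt_le_sqrt (by linarith)
      _ = 2 * √K := by rw [sqrt_mul (by norm_num), sqrt_sq (by norm_num)]
  have hsqrt : √(n : ℝ) ≤ n ^ (1 - ε / 2) := by
    rw [sqrt_eq_rpow]
    exact rpow_le_rpow_of_exponent_le hn' (by linarith)
  have hdiv : (n : ℝ) / √K ≤ 2 * n ^ (1 - ε / 2) := by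
    rw [div_le_iff₀ hsK]
    nth_rw 1 [hsplit]
    calc (n : ℝ) ^ (1 - ε / 2) * n ^ (ε / 2) ≤ n ^ (1 - ε / 2) * (2 * √K) := by gcongr
      _ = 2 * n ^ (1 - ε / 2) * √K := by ring
  linarith

namespace BT

theorem size_pos (t : BT) : 0 < size t := by
  induction t with
  | leaf => simp [size]
  | node l r _ _ => simp only [size]; omega

theorem size_eq_of_mem_treesOfSize {n : ℕ} {t : BT} (ht : t ∈ treesOfSize n) : size t = n := by
  induction n using Nat.strong_induction_on generalizing t with
  | _ n ih =>
    match n, ht with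
    | 0, ht => simp [treesOfSize] at ht
    | 1, ht => simp_all [treesOfSize, size]
    | n + 2, ht =>
      rw [treesOfSize] at ht
      simp only [mem_biUnion, mem_attach, mem_image, mem_product, true_and, Subtype.exists,
        mem_range] at ht
      obtain ⟨k, hk, ⟨l, r⟩, ⟨hl, hr⟩, rfl⟩ := ht
      simp only [size, ih _ (by omega) hl, ih _ (by omega) hr]
      omega

theorem sum_treesOfSize_add_two {M : Type*} [AddCommMonoid M] (n : ℕ) (f : BT → M) :
    ∑ t ∈ treesOfSize (n + 2), f t =
      ∑ ij ∈ antidiagonal n, ∑ l ∈ treesOfSize (ij.1 + 1), ∑ r ∈ treesOfSize (ij.2 + 1),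
        f (node l r) := by
  rw [treesOfSize, sum_biUnion, sum_attach (range (n + 1)) (fun k => ∑ t ∈
      ((treesOfSize (k + 1)) ×ˢ (treesOfSize (n + 1 - k))).image (fun p => node p.1 p.2), f t),
    Nat.sum_antidiagonal_eq_sum_range_succ (fun i j => ∑ l ∈ treesOfSize (i + 1),
      ∑ r ∈ treesOfSize (j + 1), f (node l r))]
  · refine sum_congr rfl fun k hk => ?_
    rw [sum_image (fun p _ q _ h => by cases p; cases q; cases h; rfl), sum_product,
      show n + 1 - k = n - k + 1 by have := mem_range.mp hk; omega]
  · intro i _ j _ hij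
    simp only [Function.onFun, disjoint_left, mem_image, mem_product, not_exists, not_and]
    rintro _ ⟨⟨l, r⟩, ⟨hl, -⟩, rfl⟩ ⟨l', r'⟩ ⟨hl', -⟩ h
    cases h
    have := (size_eq_of_mem_treesOfSize hl).symm.trans (size_eq_of_mem_treesOfSize hl')
    exact hij (Subtype.ext (by omega))

theorem card_treesOfSize (n : ℕ) : #(treesOfSize (n + 1)) = catalan n := by
  induction n using Nat.strong_induction_on with
  | _ n ih =>
    match n with
    | 0 => simp [treesOfSize]
    | n + 1 =>
      rw [card_eq_sum_ones, sum_treesOfSize_add_two, catalan_succ']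
      refine sum_congr rfl fun ij hij => ?_
      have := mem_antidiagonal.mp hij
      simp only [sum_const, smul_eq_mul, mul_one, ih _ (by omega : ij.1 < n + 1),
        ih _ (by omega : ij.2 < n + 1)]

theorem size_le_of_mem_fringe {s t : BT} (hs : s ∈ fringe t) : size s ≤ size t := by
  induction t with
  | leaf => simp_all [fringe]
  | node l r ihl ihr =>
    rw [fringe, Multiset.mem_cons, Multiset.mem_add] at hs
    rcases hs with rfl | hs | hs
    · rfl
    · exact (ihl hs).trans (by simp [size])
    · exact (ihr hs).trans (by simp [size])

def fringeSizeCount (n m : ℕ) : ℕ :=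
  ∑ t ∈ treesOfSize n, (fringe t).countP (fun s => size s = m)

theorem countP_fringe_size_eq_size (t : BT) : (fringe t).countP (fun s => size s = size t) = 1 := by
  cases t with
  | leaf => rfl
  | node l r =>
    have hsmall : ∀ s ∈ fringe l + fringe r, size s ≠ size (node l r) := by
      intro s hs
      have := size_pos l
      have := size_pos r
      rcases Multiset.mem_add.mp hs with hs | hs <;>
        · have := size_le_of_mem_fringe hs
          simp only [size]
          omega
    rw [fringe, Multiset.countP_cons, if_pos rfl, Multiset.countP_eq_zero.mpr hsmall]

theorem fringeSizeCount_self (m : ℕ) : fringeSizeCount (m + 1) (m + 1) = catalan m := by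
  rw [fringeSizeCount, ← card_treesOfSize, card_eq_sum_ones]
  refine sum_congr rfl fun t ht => ?_
  rw [← size_eq_of_mem_treesOfSize ht, countP_fringe_size_eq_size]

theorem fringeSizeCount_eq_zero {n m : ℕ} (h : n < m) : fringeSizeCount n m = 0 :=
  sum_eq_zero fun t ht => Multiset.countP_eq_zero.mpr fun s hs => by
    have := size_le_of_mem_fringe hs
    rw [size_eq_of_mem_treesOfSize ht] at this
    omega

theorem fringeSizeCount_add_two {p m : ℕ} (h : m ≠ p + 2) :
    fringeSizeCount (p + 2) m
      = 2 * ∑ ij ∈ antidiagonal p, fringeSizeCount (ij.1 + 1) m * catalan ij.2 := by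
  have hnode : ∀ ij ∈ antidiagonal p,
      ∑ l ∈ treesOfSize (ij.1 + 1), ∑ r ∈ treesOfSize (ij.2 + 1),
        (fringe (node l r)).countP (fun s => size s = m)
      = fringeSizeCount (ij.1 + 1) m * catalan ij.2
        + catalan ij.1 * fringeSizeCount (ij.2 + 1) m := by
    intro ij hij
    have hroot : ∀ l ∈ treesOfSize (ij.1 + 1), ∀ r ∈ treesOfSize (ij.2 + 1), size (node l r) ≠ m :=
      fun l hl r hr => by
        simp only [size, size_eq_of_mem_treesOfSize hl, size_eq_of_mem_treesOfSize hr]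
        have := mem_antidiagonal.mp hij
        omega
    rw [sum_congr rfl fun l hl => sum_congr rfl fun r hr => by
      rw [fringe, Multiset.countP_cons, if_neg (hroot l hl r hr), Multiset.countP_add, add_zero]]
    simp only [sum_add_distrib, sum_const, smul_eq_mul, card_treesOfSize, fringeSizeCount,
      mul_comm, mul_sum]
  rw [fringeSizeCount, sum_treesOfSize_add_two, sum_congr rfl hnode, sum_add_distrib, two_mul]
  congr 1
  rw [← Nat.sum_antidiagonal_swap]
  simp only [Prod.fst_swap, Prod.snd_swap, mul_comm]

theorem fringeSizeCount_add_add_one (m j : ℕ) :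
    fringeSizeCount (m + j + 1) (m + 1) = catalan m * ((j + 1) * catalan j) := by
  induction j using Nat.strong_induction_on with
  | _ j ih =>
    match j with
    | 0 => simp [fringeSizeCount_self]
    | j + 1 =>
      have hsmall : ∀ i < m, ∀ k, fringeSizeCount (i + 1) (m + 1) * catalan k = 0 :=
        fun i hi k => by rw [fringeSizeCount_eq_zero (by omega), zero_mul]
      rw [show m + (j + 1) + 1 = (m + j) + 2 by omega, fringeSizeCount_add_two (by omega),
        Nat.sum_antidiagonal_add_of_eq_zero
          (fun i k => fringeSizeCount (i + 1) (m + 1) * catalan k) hsmall,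
        ← two_mul_sum_antidiagonal_succ_mul_catalan, mul_left_comm]
      congr 1
      rw [mul_sum]
      refine sum_congr rfl fun ik hik => ?_
      have := mem_antidiagonal.mp hik
      rw [show ik.1 + m + 1 = m + ik.1 + 1 by omega, ih ik.1 (by omega)]
      ring

theorem sum_countP_fringe_lt_size (n K : ℕ) :
    ∑ t ∈ treesOfSize n, (fringe t).countP (fun s => K < size s)
      = ∑ i ∈ Ico K n, fringeSizeCount n (i + 1) := by
  have hsplit : ∀ t ∈ treesOfSize n, (fringe t).countP (fun s => K < size s)
      = ∑ m ∈ Ioc K n, (fringe t).countP (fun s => size s = m) := fun t ht =>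
    Multiset.countP_eq_sum_countP_eq _ _ _ fun s hs => by
      have := size_le_of_mem_fringe hs
      rw [size_eq_of_mem_treesOfSize ht] at this
      simp only [mem_Ioc]
      omega
  rw [sum_congr rfl hsplit, sum_comm, sum_Ico_add' (fun m => fringeSizeCount n m),
    Ico_add_one_add_one_eq_Ioc]
  rfl

theorem fringeSizeCount_div_catalan_le {i n : ℕ} (hi : i < n) :
    (fringeSizeCount n (i + 1) : ℝ) / catalan (n - 1)
      ≤ 6 * (n / ((i + 1) * √(i + 1)) + 1 / √(n - i)) := by
  obtain ⟨j, rfl⟩ := Nat.exists_eq_add_of_lt hi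
  rw [fringeSizeCount_add_add_one, Nat.add_sub_cancel]
  have hC : (0 : ℝ) < catalan (i + j) := by exact_mod_cast catalan_pos (i + j)
  have hx : (0 : ℝ) < i + 1 := by positivity
  have hy : (0 : ℝ) < j + 1 := by positivity
  have hratio : ((catalan i * ((j + 1) * catalan j) : ℕ) : ℝ) / catalan (i + j)
      ≤ 2 * (((i + j + 1 : ℕ) : ℝ) * √((i + j + 1 : ℕ) : ℝ)
        / (((i : ℝ) + 1) * √((i : ℝ) + 1) * √((j : ℝ) + 1))) := by
    rw [mul_div_assoc', div_le_div_iff₀ hC (by positivity)]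
    refine (pow_le_pow_iff_left₀ (by positivity) (by positivity) two_ne_zero).mp ?_
    calc _ = ((catalan i * ((j + 1) * catalan j) : ℕ) : ℝ) ^ 2 * (((i : ℝ) + 1) ^ 3 * (j + 1)) := by
          rw [mul_pow, mul_pow, mul_pow, sq_sqrt hx.le, sq_sqrt hy.le]; ring
      _ ≤ 4 * ((i + j + 1 : ℕ) : ℝ) ^ 3 * catalan (i + j) ^ 2 := by
          exact_mod_cast sq_catalan_mul_catalan_le i j
      _ = _ := by rw [mul_pow, mul_pow, mul_pow, sq_sqrt (Nat.cast_nonneg _)]; ring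
  have hsplit := mul_sqrt_div_le hx hy (Nat.cast_nonneg (i + j + 1))
    (by push_cast; linarith)
  calc _ ≤ 2 * (((i + j + 1 : ℕ) : ℝ) * √((i + j + 1 : ℕ) : ℝ)
        / (((i : ℝ) + 1) * √((i : ℝ) + 1) * √((j : ℝ) + 1))) := hratio
    _ ≤ 2 * (3 * (((i + j + 1 : ℕ) : ℝ) / (((i : ℝ) + 1) * √((i : ℝ) + 1))
        + 1 / √((j : ℝ) + 1))) := by gcongr
    _ = _ := by push_cast; ring_nf

theorem sum_Ico_fringeSizeCount_div_catalan_le {K : ℕ} (hK : 0 < K) (n : ℕ) :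
    ∑ i ∈ Ico K n, (fringeSizeCount n (i + 1) : ℝ) / catalan (n - 1) ≤ 12 * (n / √K + √n) :=
  calc ∑ i ∈ Ico K n, (fringeSizeCount n (i + 1) : ℝ) / catalan (n - 1)
      ≤ ∑ i ∈ Ico K n, 6 * (n * (1 / ((i + 1) * √(i + 1))) + 1 / √(n - i)) :=
        sum_le_sum fun i hi => by
          rw [mul_one_div]
          exact fringeSizeCount_div_catalan_le (mem_Ico.mp hi).2
    _ = 6 * (n * ∑ i ∈ Ico K n, 1 / ((i + 1) * √(i + 1)) + ∑ i ∈ Ico K n, 1 / √(n - i)) := by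
        rw [← mul_sum, sum_add_distrib, ← mul_sum]
    _ ≤ 6 * (n * (2 / √K) + 2 * √n) := by
        gcongr
        · exact sum_Ico_inv_succ_mul_sqrt_succ_le hK n
        · exact sum_Ico_inv_sqrt_sub_le K n
    _ = 12 * (n / √K + √n) := by ring

end BT

open BT in
/-- For fixed `0 < ε < 1/3`, there is a constant `C > 0` such that the
expected number `E(Y_{n,ε})` of fringe subtrees with more than `n^ε` leaves in a
uniformly random ordered binary tree with `n` leaves satisfies
`E(Y_{n,ε}) ≤ C·n^{1−ε/2}` for all `n ≥ 1`. -/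
theorem expected_large_fringe_count_uniform
    (ε : ℝ) (hε0 : 0 < ε) (hε : ε < 1 / 3) :
    ∃ C : ℝ, 0 < C ∧ ∀ n : ℕ, 1 ≤ n →
      unifE n (fun t =>
          (Multiset.countP (fun s => (n : ℝ) ^ ε < (size s : ℝ)) (fringe t) : ℝ))
        ≤ C * (n : ℝ) ^ (1 - ε / 2) := by
  refine ⟨36, by norm_num, fun n hn => ?_⟩
  set K := ⌊(n : ℝ) ^ ε⌋₊
  have hK : 0 < K := Nat.floor_pos.mpr (one_le_rpow (by exact_mod_cast hn) hε0.le)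
  have hcount : ∀ t, (fringe t).countP (fun s => (n : ℝ) ^ ε < size s)
      = (fringe t).countP (fun s => K < size s) := fun t =>
    Multiset.countP_congr rfl fun s _ => propext (Nat.floor_lt (by positivity)).symm
  have hcard : (#(treesOfSize n) : ℝ) = catalan (n - 1) := by
    rw [← card_treesOfSize, Nat.sub_add_cancel hn]
  calc unifE n _ = ∑ i ∈ Ico K n, (fringeSizeCount n (i + 1) : ℝ) / catalan (n - 1) := by
        rw [unifE, hcard, ← sum_div]
        simp only [hcount]
        exact_mod_cast congrArg (fun x : ℕ => (x : ℝ) / catalan (n - 1))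
          (sum_countP_fringe_lt_size n K)
    _ ≤ 12 * (n / √K + √n) := sum_Ico_fringeSizeCount_div_catalan_le hK n
    _ ≤ 12 * (3 * (n : ℝ) ^ (1 - ε / 2)) := by
        gcongr
        exact div_sqrt_add_sqrt_le_rpow (by linarith) hn hK (Nat.lt_floor_add_one _)
    _ = 36 * (n : ℝ) ^ (1 - ε / 2) := by ring
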